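/- arXiv:2209.10162 — 2 statements merged into one kernel-verified Lean document; each statement's English description precedes it below -/
import Mathlib

section
/- For every finitely supported real sequence Φ (reduced phase factors of the even-parity case), ‖F(Φ)‖₁ ≤ sinh(2·‖Φ‖₁). -/
open scoped Real
noncomputable section

/-- The QSP signal matrix `W(x)`: diagonal entries `x`, off-diagonal entries `i√(1-x²)`. -/
def Wmat (x : ℝ) : Matrix (Fin 2) (Fin 2) ℂ :=
  !![(x : ℂ), Complex.I * (Real.sqrt (1 - x ^ 2) : ℂ);
     Complex.I * (Real.sqrt (1 - x ^ 2) : ℂ), (x : ℂ)]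

/-- `exp(i ψ Z)` where `Z = diag(1, -1)`. -/
def expZ (ψ : ℝ) : Matrix (Fin 2) (Fin 2) ℂ :=
  !![Complex.exp (Complex.I * (ψ : ℂ)), 0; 0, Complex.exp (-(Complex.I * (ψ : ℂ)))]

/-- The QSP unitary `U(x, Ψ) = e^{iψ₀Z} ∏_{j=1}^{d} (W(x) e^{iψ_j Z})`,
with phase factors `ψ₀, …, ψ_d` given as the first `d+1` entries of `Ψ : ℕ → ℝ`. -/
def Umat (x : ℝ) (d : ℕ) (Ψ : ℕ → ℝ) : Matrix (Fin 2) (Fin 2) ℂ :=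
  expZ (Ψ 0) * (((List.range d).map fun j => Wmat x * expZ (Ψ (j + 1))).prod)

/-- `g(x, Ψ) = Im ⟨0|U(x,Ψ)|0⟩`. -/
def gfun (x : ℝ) (d : ℕ) (Ψ : ℕ → ℝ) : ℝ := (Umat x d Ψ 0 0).im

/-- The partial derivative `∂g(x,Ψ)/∂ψ_k`. -/
def gfunPD (x : ℝ) (d k : ℕ) (Ψ : ℕ → ℝ) : ℝ :=
  deriv (fun t => gfun x d (Function.update Ψ k t)) (Ψ k)

/-- The second partial derivative `∂²g(x,Ψ)/∂ψ_r∂ψ_s`. -/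
def gfunPD2 (x : ℝ) (d r s : ℕ) (Ψ : ℕ → ℝ) : ℝ :=
  deriv (fun t => gfunPD x d s (Function.update Ψ r t)) (Ψ r)

/-- The full symmetric phase-factor sequence
`Ψ(Φ, n) = (φ_{n-1}, …, φ₁, 2φ₀, φ₁, …, φ_{n-1})` of length `2n-1`
associated with even-parity reduced phase factors `Φ`. -/
def pad (Φ : ℕ →₀ ℝ) (n : ℕ) : ℕ → ℝ := fun j =>
  if j + 1 < n then Φ (n - 1 - j) else if j + 1 = n then 2 * Φ 0 else Φ (j + 1 - n)

/-- One plus the largest element of the support of `Φ`; thus `Φ k = 0` for all `k ≥ nOf Φ`. -/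
def nOf (Φ : ℕ →₀ ℝ) : ℕ := Φ.support.sup id + 1

/-- `g(x, Φ)` for even-parity reduced phase factors `Φ` (independent of the padding length). -/
def gred (x : ℝ) (Φ : ℕ →₀ ℝ) : ℝ := gfun x (2 * nOf Φ - 2) (pad Φ (nOf Φ))

/-- The `j`-th coefficient in the even Chebyshev expansion `f = ∑_j c_j T_{2j}` on `[-1,1]`,
defined via the Fourier-type integral formula, which recovers the coefficients whenever
`f` restricted to `[-1,1]` is such a finite combination. -/
def chebCoeff (f : ℝ → ℝ) (j : ℕ) : ℝ :=
  (if j = 0 then 1 / (2 * π) else 1 / π) *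
    ∫ θ in (0:ℝ)..(2 * π), f (Real.cos θ) * Real.cos (2 * j * θ)

/-- `F(Φ)`: the Chebyshev-coefficient sequence of `g(·, Φ)`, so that
`g(x,Φ) = ∑_j (F Φ)_j T_{2j}(x)` on `[-1,1]`. -/
def Fmap (Φ : ℕ →₀ ℝ) (j : ℕ) : ℝ := chebCoeff (fun x => gred x Φ) j

/-- The ℓ¹ norm of a finitely supported sequence. -/
def l1 (Φ : ℕ →₀ ℝ) : ℝ := ∑ k ∈ Φ.support, |Φ k|

/-- Partial derivative `∂g(x,Φ)/∂φ_k`. -/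
def gredPD (k : ℕ) (x : ℝ) (Φ : ℕ →₀ ℝ) : ℝ :=
  deriv (fun t => gred x (Φ.update k t)) (Φ k)

/-- Partial derivative `∂F/∂φ_k (Φ)` (the `k`-th column of the Jacobian `DF(Φ)`). -/
def FmapPD (k : ℕ) (Φ : ℕ →₀ ℝ) (j : ℕ) : ℝ :=
  deriv (fun t => Fmap (Φ.update k t) j) (Φ k)

/-- Second partial derivative `∂²F/∂φ_r∂φ_s (Φ)`. -/
def FmapPD2 (r s : ℕ) (Φ : ℕ →₀ ℝ) (j : ℕ) : ℝ :=
  deriv (fun t => FmapPD s (Φ.update r t) j) (Φ r)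

/-- `h(x) = 2cosh(2x) - 2`. -/
def hfun (x : ℝ) : ℝ := 2 * Real.cosh (2 * x) - 2

/-- `H(x) = 4x - sinh(2x)`. -/
def Hfun (x : ℝ) : ℝ := 4 * x - Real.sinh (2 * x)

/-- `r_Φ = arccosh(2)/2 = log(2+√3)/2 ≈ 0.658`, the unique positive solution of `h(r) = 2`. -/
def rPhi : ℝ := Real.log (2 + Real.sqrt 3) / 2

/-- `r_c = H(r_Φ) ≈ 0.902`. -/
def rc : ℝ := Hfun rPhi

/-- The inverse `H⁻¹` of `H` on `[0, r_c]` (the preimage taken in `[0, r_Φ]`). -/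
def Hinv (y : ℝ) : ℝ := Function.invFunOn Hfun (Set.Icc 0 rPhi) y

/-- `r̃_Φ = arcsinh(arccosh 2)/2 ≈ 0.544`. -/
def rPhiT : ℝ := Real.arsinh (Real.log (2 + Real.sqrt 3)) / 2

/-- `r̃_c = H(r̃_Φ) ≈ 0.861`. -/
def rcT : ℝ := Hfun rPhiT

/-- `γ(r) = (1/2)∫₀¹ h(r + s((1/2)sinh(2r) - r)) ds`. -/
def gam (r : ℝ) : ℝ := (1 / 2) * ∫ s in (0:ℝ)..1, hfun (r + s * (Real.sinh (2 * r) / 2 - r))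

/-- The real sequence space ℓ¹. -/
abbrev ell1 : Type := lp (fun _ : ℕ => ℝ) 1

theorem finsupp_memℓp (Φ : ℕ →₀ ℝ) : Memℓp (fun k => (Φ k : ℝ)) 1 := by
  apply memℓp_gen
  apply summable_of_ne_finset_zero (s := Φ.support)
  intro i hi
  simp [Finsupp.notMem_support_iff.mp hi]

/-- A finitely supported sequence as an element of ℓ¹. -/
def toL1 (Φ : ℕ →₀ ℝ) : ell1 := ⟨fun k => Φ k, finsupp_memℓp Φ⟩

/-! At `x = cos θ`, `θ ∈ [0, π]`, the signal matrix is `W = exp(iθX)` (`X` the Pauli matrix),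
and row 0 of `∏ W e^{iψ_j Z}` stays a finite combination `∑_a c_a (cos aθ, i sin aθ)` of rows
of `exp(iaθX)`: since `e^{iψZ} = cos ψ + i sin ψ Z` and `Z e^{iaθX} = e^{-iaθX} Z`, each factor
maps the coefficients `c` to `cos ψ · c(· - 1) + i sin ψ · c(-(· + 1))`. Hence the ℓ¹ norms `R`
of `Re c` and `J` of `Im c` obey `R' ≤ |cos ψ| R + |sin ψ| J` and `J' ≤ |cos ψ| J + |sin ψ| R`,
so by the addition formulas they stay below `cosh` and `sinh` of `∑ |ψ_j|`. By orthogonality of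
the `cos aθ` on `[0, 2π]`, the `j`-th Chebyshev coefficient of `g` is the sum of
`Im (e^{iψ₀} c_a)` over `|a| = 2j`, so
`‖F(Φ)‖₁ ≤ ∑_a |Im (e^{iψ₀} c_a)| ≤ sinh (∑_j |ψ_j|) = sinh (2‖Φ‖₁)`. -/

namespace QSP

open Complex Matrix

-- Row 0 of `exp (i a θ X)`; for `θ ∈ [0, π]`, `Wmat (cos θ) = exp (i θ X)`.
def cisRow (θ : ℝ) (a : ℤ) : Fin 2 → ℂ :=
  ![(Real.cos (a * θ) : ℂ), I * (Real.sin (a * θ) : ℂ)]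

lemma cisRow_vecMul_Wmat {θ : ℝ} (h₀ : 0 ≤ θ) (hπ : θ ≤ π) (a : ℤ) :
    cisRow θ a ᵥ* Wmat (Real.cos θ) = cisRow θ (a + 1) := by
  have hsqrt : Real.sqrt (1 - Real.cos θ ^ 2) = Real.sin θ := by
    rw [← Real.sin_sq, Real.sqrt_sq (Real.sin_nonneg_of_nonneg_of_le_pi h₀ hπ)]
  ext i
  fin_cases i <;>
    simp only [vecMul, dotProduct, cisRow, ofReal_cos, ofReal_mul, ofReal_intCast, ofReal_sin, Wmat,
      hsqrt, Fin.zero_eta, Fin.mk_one, Fin.isValue, of_apply, cons_val', cons_val_zero,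
      cons_val_one, cons_val_fin_one, Fin.sum_univ_two, Int.cast_add, Int.cast_one, add_mul,
      one_mul, ofReal_add, cos_add, sin_add]
  · linear_combination (sin (a * θ) * sin θ : ℂ) * I_sq
  · ring

lemma cisRow_vecMul_expZ (θ ψ : ℝ) (a : ℤ) :
    cisRow θ a ᵥ* expZ ψ =
      (Real.cos ψ : ℂ) • cisRow θ a + (I * Real.sin ψ) • cisRow θ (-a) := by
  have hpos : exp (I * ψ) = cos ψ + I * sin ψ := by
    rw [mul_comm, exp_mul_I, mul_comm I]
  have hneg : exp (-(I * ψ)) = cos ψ - I * sin ψ := by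
    rw [show -(I * ψ) = (-ψ : ℂ) * I by ring, exp_mul_I, cos_neg, sin_neg]
    ring
  ext i
  fin_cases i <;>
    simp only [vecMul, dotProduct, cisRow, ofReal_cos, ofReal_mul, ofReal_intCast, ofReal_sin, expZ,
      hpos, hneg, Fin.zero_eta, Fin.mk_one, Fin.isValue, of_apply, cons_val', cons_val_zero,
      cons_val_one, cons_val_fin_one, Fin.sum_univ_two, mul_zero, add_zero, zero_add, smul_cons,
      smul_eq_mul, smul_empty, Int.cast_neg, neg_mul, Real.cos_neg, Real.sin_neg, ofReal_neg,
      mul_neg, Pi.add_apply] <;>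
    ring

def rowOf (θ : ℝ) : (ℤ →₀ ℂ) →ₗ[ℂ] Fin 2 → ℂ := Finsupp.linearCombination ℂ (cisRow θ)

-- `e^{iaθX} W e^{iψZ} = cos ψ e^{i(a+1)θX} + i sin ψ Z e^{-i(a+1)θX}`, and `Z` fixes row 0.
def phaseStep (ψ : ℝ) (c : ℤ →₀ ℂ) : ℤ →₀ ℂ :=
  (Real.cos ψ : ℂ) • c.mapDomain (· + 1) + (I * Real.sin ψ) • c.mapDomain (fun a => -(a + 1))

lemma rowOf_vecMul_Wmat_mul_expZ {θ : ℝ} (h₀ : 0 ≤ θ) (hπ : θ ≤ π) (ψ : ℝ) (c : ℤ →₀ ℂ) :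
    rowOf θ c ᵥ* (Wmat (Real.cos θ) * expZ ψ) = rowOf θ (phaseStep ψ c) := by
  induction c using Finsupp.induction_linear with
  | zero => simp [phaseStep]
  | add c d hc hd =>
    simp only [phaseStep, Finsupp.mapDomain_add, smul_add, map_add, add_vecMul] at *
    rw [hc, hd]; abel
  | single a z =>
    simp only [rowOf, phaseStep, Finsupp.mapDomain_single, map_add, map_smul,
      Finsupp.linearCombination_single, smul_vecMul, ← vecMul_vecMul, cisRow_vecMul_Wmat h₀ hπ,
      cisRow_vecMul_expZ, neg_add]
    module

def qspCoeffs (Ψ : ℕ → ℝ) : ℕ → ℤ →₀ ℂ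
  | 0 => Finsupp.single 0 1
  | d + 1 => phaseStep (Ψ (d + 1)) (qspCoeffs Ψ d)

lemma single_vecMul_prod_eq_rowOf {θ : ℝ} (h₀ : 0 ≤ θ) (hπ : θ ≤ π) (Ψ : ℕ → ℝ) (d : ℕ) :
    Pi.single 0 1 ᵥ* ((List.range d).map fun j => Wmat (Real.cos θ) * expZ (Ψ (j + 1))).prod =
      rowOf θ (qspCoeffs Ψ d) := by
  induction d with
  | zero =>
    ext i
    fin_cases i <;> simp [qspCoeffs, rowOf, cisRow]
  | succ d ih =>
    rw [List.range_succ, List.map_append, List.prod_append, ← vecMul_vecMul, ih]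
    simp [qspCoeffs, rowOf_vecMul_Wmat_mul_expZ h₀ hπ]

lemma cos_int_mul_arccos_cos (a : ℤ) (θ : ℝ) :
    Real.cos (a * Real.arccos (Real.cos θ)) = Real.cos (a * θ) := by
  rw [← Polynomial.Chebyshev.T_real_cos, ← Polynomial.Chebyshev.T_real_cos,
    Real.cos_arccos (Real.neg_one_le_cos θ) (Real.cos_le_one θ)]

lemma gfun_cos (d : ℕ) (Ψ : ℕ → ℝ) (θ : ℝ) :
    gfun (Real.cos θ) d Ψ = ∑ a ∈ (qspCoeffs Ψ d).support,
      (exp (I * Ψ 0) * qspCoeffs Ψ d a).im * Real.cos (a * θ) := by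
  -- `√(1 - x²) = sin θ` needs `θ ∈ [0, π]`, so work at `arccos (cos θ)` instead of `θ`.
  have hrow := single_vecMul_prod_eq_rowOf (Real.arccos_nonneg (Real.cos θ)) (Real.arccos_le_pi _) Ψ d
  rw [Real.cos_arccos (Real.neg_one_le_cos θ) (Real.cos_le_one θ), single_one_vecMul] at hrow
  have h00 := congrFun hrow 0
  simp only [row, rowOf, Finsupp.linearCombination_apply, Finsupp.sum, Finset.sum_apply,
    Pi.smul_apply, cisRow, cos_int_mul_arccos_cos] at h00
  have hZ : expZ (Ψ 0) 0 0 = exp (I * Ψ 0) ∧ expZ (Ψ 0) 0 1 = 0 := by simp [expZ]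
  rw [gfun, Umat, mul_apply, Fin.sum_univ_two, h00, hZ.1, hZ.2, zero_mul, add_zero,
    Finset.mul_sum, im_sum]
  simp only [smul_eq_mul, cons_val_zero, ← mul_assoc, im_mul_ofReal]

lemma integral_cos_int_mul (n : ℤ) :
    ∫ θ in (0 : ℝ)..2 * π, Real.cos (n * θ) = if n = 0 then 2 * π else 0 := by
  split_ifs with hn
  · simp [hn]
  · have hn' : (n : ℝ) ≠ 0 := Int.cast_ne_zero.mpr hn
    rw [intervalIntegral.integral_comp_mul_left (fun θ => Real.cos θ) hn', integral_cos,
      show (n : ℝ) * (2 * π) = ((2 * n : ℤ) : ℝ) * π by push_cast; ring, Real.sin_int_mul_pi]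
    simp

lemma integral_cos_int_mul_mul_cos_nat_mul (m : ℤ) (k : ℕ) :
    ∫ θ in (0 : ℝ)..2 * π, Real.cos (m * θ) * Real.cos (k * θ) =
      if m.natAbs = k then (if k = 0 then 2 * π else π) else 0 := by
  have hprod : ∀ θ : ℝ, Real.cos (m * θ) * Real.cos (k * θ) =
      (Real.cos (((m - k : ℤ) : ℝ) * θ) + Real.cos (((m + k : ℤ) : ℝ) * θ)) / 2 := by
    intro θ
    push_cast
    rw [sub_mul, add_mul, ← Real.two_mul_cos_mul_cos]
    ring
  have hint : ∀ n : ℤ, IntervalIntegrable (fun θ => Real.cos (n * θ)) MeasureTheory.volume 0 (2 * π) :=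
    fun n => (Real.continuous_cos.comp (continuous_const.mul continuous_id)).intervalIntegrable _ _
  simp only [hprod, intervalIntegral.integral_div, intervalIntegral.integral_add (hint _) (hint _),
    integral_cos_int_mul]
  rcases Int.natAbs_eq m with hm | hm <;> split_ifs <;> first | omega | ring

lemma chebCoeff_eq_of_cos {f : ℝ → ℝ} {s : Finset ℤ} {w : ℤ → ℝ}
    (hf : ∀ θ, f (Real.cos θ) = ∑ a ∈ s, w a * Real.cos (a * θ)) (j : ℕ) :
    chebCoeff f j = ∑ a ∈ s, if a.natAbs = 2 * j then w a else 0 := by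
  have hcast : ∀ θ : ℝ, 2 * (j : ℝ) * θ = ((2 * j : ℕ) : ℝ) * θ := by push_cast; simp
  have hint : ∀ a ∈ s, IntervalIntegrable (fun θ => w a * Real.cos (a * θ) *
      Real.cos (((2 * j : ℕ) : ℝ) * θ)) MeasureTheory.volume 0 (2 * π) := fun a _ =>
    (by fun_prop : Continuous fun θ : ℝ => w a * Real.cos (a * θ) *
      Real.cos (((2 * j : ℕ) : ℝ) * θ)).intervalIntegrable _ _
  simp only [chebCoeff, hf, hcast, Finset.sum_mul]
  rw [intervalIntegral.integral_finsetSum hint, Finset.mul_sum]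
  refine Finset.sum_congr rfl fun a _ => ?_
  simp only [mul_assoc, intervalIntegral.integral_const_mul,
    integral_cos_int_mul_mul_cos_nat_mul]
  split_ifs <;> first | omega | (simp; done) | field_simp

lemma sum_ite_eq_two_mul_le (T : Finset ℕ) (n : ℕ) {x : ℝ} (hx : 0 ≤ x) :
    ∑ j ∈ T, (if n = 2 * j then x else 0) ≤ x :=
  calc ∑ j ∈ T, (if n = 2 * j then x else 0)
      ≤ ∑ j ∈ T, (if n / 2 = j then x else 0) :=
        Finset.sum_le_sum fun j _ => by split_ifs <;> first | rfl | omega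
    _ ≤ x := by rw [Finset.sum_ite_eq]; split_ifs <;> first | rfl | exact hx

lemma summable_abs_and_tsum_abs_le {u : ℕ → ℝ} {s : Finset ℤ} {w : ℤ → ℝ}
    (hu : ∀ j, u j = ∑ a ∈ s, if a.natAbs = 2 * j then w a else 0) :
    Summable (fun j => |u j|) ∧ ∑' j, |u j| ≤ ∑ a ∈ s, |w a| := by
  set T := s.image fun a => a.natAbs / 2
  have hzero : ∀ j ∉ T, |u j| = 0 := by
    intro j hj
    rw [abs_eq_zero, hu, Finset.sum_eq_zero]
    intro a ha
    rw [if_neg]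
    rintro h
    exact hj (Finset.mem_image.mpr ⟨a, ha, by omega⟩)
  refine ⟨summable_of_ne_finset_zero hzero, ?_⟩
  calc ∑' j, |u j| = ∑ j ∈ T, |u j| := tsum_eq_sum hzero
    _ ≤ ∑ j ∈ T, ∑ a ∈ s, if a.natAbs = 2 * j then |w a| else 0 := by
        refine Finset.sum_le_sum fun j _ => ?_
        rw [hu]
        refine (Finset.abs_sum_le_sum_abs _ _).trans_eq (Finset.sum_congr rfl fun a _ => ?_)
        split_ifs <;> simp
    _ = ∑ a ∈ s, ∑ j ∈ T, if a.natAbs = 2 * j then |w a| else 0 := Finset.sum_comm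
    _ ≤ ∑ a ∈ s, |w a| :=
        Finset.sum_le_sum fun a _ => sum_ite_eq_two_mul_le T _ (abs_nonneg _)

section Norms

variable {α : Type*}

def reNorm (c : α →₀ ℂ) : ℝ := c.sum fun _ z => |z.re|

def imNorm (c : α →₀ ℂ) : ℝ := c.sum fun _ z => |z.im|

lemma reNorm_nonneg (c : α →₀ ℂ) : 0 ≤ reNorm c :=
  Finset.sum_nonneg fun _ _ => abs_nonneg _

lemma imNorm_nonneg (c : α →₀ ℂ) : 0 ≤ imNorm c :=
  Finset.sum_nonneg fun _ _ => abs_nonneg _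

lemma sum_abs_add_le {M : Type*} [AddCommMonoid M] (g : M →+ ℝ) (c d : α →₀ M) :
    (c + d).sum (fun _ z => |g z|) ≤ c.sum (fun _ z => |g z|) + d.sum (fun _ z => |g z|) := by
  classical
  have hsub : ∀ e : α →₀ M, e.support ⊆ c.support ∪ d.support →
      e.sum (fun _ z => |g z|) = ∑ a ∈ c.support ∪ d.support, |g (e a)| := fun e he =>
    Finsupp.sum_of_support_subset e he _ fun _ _ => by simp
  rw [hsub _ Finsupp.support_add, hsub c Finset.subset_union_left,
    hsub d Finset.subset_union_right, ← Finset.sum_add_distrib]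
  exact Finset.sum_le_sum fun a _ => by simpa using abs_add_le (g (c a)) (g (d a))

lemma reNorm_add_le (c d : α →₀ ℂ) : reNorm (c + d) ≤ reNorm c + reNorm d :=
  sum_abs_add_le reAddGroupHom c d

lemma imNorm_add_le (c d : α →₀ ℂ) : imNorm (c + d) ≤ imNorm c + imNorm d :=
  sum_abs_add_le imAddGroupHom c d

lemma reNorm_ofReal_smul (r : ℝ) (c : α →₀ ℂ) : reNorm ((r : ℂ) • c) = |r| * reNorm c := by
  rw [reNorm, reNorm, Finsupp.sum_smul_index (by simp), Finsupp.mul_sum]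
  simp [abs_mul]

lemma imNorm_ofReal_smul (r : ℝ) (c : α →₀ ℂ) : imNorm ((r : ℂ) • c) = |r| * imNorm c := by
  rw [imNorm, imNorm, Finsupp.sum_smul_index (by simp), Finsupp.mul_sum]
  simp [abs_mul]

lemma reNorm_I_mul_smul (r : ℝ) (c : α →₀ ℂ) : reNorm ((I * r) • c) = |r| * imNorm c := by
  simp [reNorm, imNorm, Finsupp.sum_smul_index, Finsupp.mul_sum, abs_mul]

lemma imNorm_I_mul_smul (r : ℝ) (c : α →₀ ℂ) : imNorm ((I * r) • c) = |r| * reNorm c := by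
  simp [reNorm, imNorm, Finsupp.sum_smul_index, Finsupp.mul_sum, abs_mul]

lemma reNorm_mapDomain {β : Type*} {f : α → β} (hf : Function.Injective f) (c : α →₀ ℂ) :
    reNorm (c.mapDomain f) = reNorm c :=
  Finsupp.sum_mapDomain_index_inj hf

lemma imNorm_mapDomain {β : Type*} {f : α → β} (hf : Function.Injective f) (c : α →₀ ℂ) :
    imNorm (c.mapDomain f) = imNorm c :=
  Finsupp.sum_mapDomain_index_inj hf

lemma imNorm_smul_eq_sum (b : ℂ) (c : α →₀ ℂ) :
    imNorm (b • c) = ∑ a ∈ c.support, |(b * c a).im| := by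
  rw [imNorm, Finsupp.sum_smul_index (by simp), Finsupp.sum]

lemma norms_smul_add_I_mul_smul_le (x y : ℝ) (c d : α →₀ ℂ) :
    reNorm ((x : ℂ) • c + (I * y) • d) ≤ |x| * reNorm c + |y| * imNorm d ∧
      imNorm ((x : ℂ) • c + (I * y) • d) ≤ |x| * imNorm c + |y| * reNorm d := by
  refine ⟨(reNorm_add_le _ _).trans_eq ?_, (imNorm_add_le _ _).trans_eq ?_⟩ <;>
    simp only [reNorm_ofReal_smul, imNorm_ofReal_smul, reNorm_I_mul_smul, imNorm_I_mul_smul]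

end Norms

lemma abs_cos_mul_add_abs_sin_mul_le {R J S : ℝ} (hR₀ : 0 ≤ R) (hJ₀ : 0 ≤ J) (hR : R ≤ Real.cosh S)
    (hJ : J ≤ Real.sinh S) (ψ : ℝ) :
    |Real.cos ψ| * R + |Real.sin ψ| * J ≤ Real.cosh (S + |ψ|) ∧
      |Real.cos ψ| * J + |Real.sin ψ| * R ≤ Real.sinh (S + |ψ|) := by
  have hcos : |Real.cos ψ| ≤ Real.cosh |ψ| := (Real.abs_cos_le_one ψ).trans (Real.one_le_cosh _)
  have hsin : |Real.sin ψ| ≤ Real.sinh |ψ| :=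
    Real.abs_sin_le_abs.trans (Real.self_le_sinh_iff.mpr (abs_nonneg ψ))
  have hcosh₀ : 0 ≤ Real.cosh |ψ| := (Real.cosh_pos _).le
  have hsinh₀ : 0 ≤ Real.sinh |ψ| := Real.sinh_nonneg_iff.mpr (abs_nonneg ψ)
  rw [Real.cosh_add, Real.sinh_add]
  constructor
  · linarith [mul_le_mul hcos hR hR₀ hcosh₀, mul_le_mul hsin hJ hJ₀ hsinh₀]
  · linarith [mul_le_mul hcos hJ hJ₀ hcosh₀, mul_le_mul hsin hR hR₀ hsinh₀]

lemma qspCoeffs_norms_le (Ψ : ℕ → ℝ) (d : ℕ) :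
    reNorm (qspCoeffs Ψ d) ≤ Real.cosh (∑ k ∈ Finset.range d, |Ψ (k + 1)|) ∧
      imNorm (qspCoeffs Ψ d) ≤ Real.sinh (∑ k ∈ Finset.range d, |Ψ (k + 1)|) := by
  induction d with
  | zero => simp [qspCoeffs, reNorm, imNorm]
  | succ d ih =>
    have hshift : Function.Injective fun a : ℤ => a + 1 := add_left_injective 1
    have hflip : Function.Injective fun a : ℤ => -(a + 1) := neg_injective.comp hshift
    obtain ⟨hre, him⟩ := norms_smul_add_I_mul_smul_le (Real.cos (Ψ (d + 1)))
      (Real.sin (Ψ (d + 1))) ((qspCoeffs Ψ d).mapDomain _) ((qspCoeffs Ψ d).mapDomain _)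
    rw [reNorm_mapDomain hshift, imNorm_mapDomain hflip] at hre
    rw [imNorm_mapDomain hshift, reNorm_mapDomain hflip] at him
    obtain ⟨hcosh, hsinh⟩ := abs_cos_mul_add_abs_sin_mul_le (reNorm_nonneg _) (imNorm_nonneg _) ih.1 ih.2
      (Ψ (d + 1))
    rw [Finset.sum_range_succ]
    exact ⟨hre.trans hcosh, him.trans hsinh⟩

lemma imNorm_exp_smul_qspCoeffs_le (Ψ : ℕ → ℝ) (d : ℕ) :
    imNorm (exp (I * Ψ 0) • qspCoeffs Ψ d) ≤ Real.sinh (∑ k ∈ Finset.range (d + 1), |Ψ k|) := by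
  have hexp : exp (I * Ψ 0) = (Real.cos (Ψ 0) : ℂ) + I * Real.sin (Ψ 0) := by
    rw [mul_comm, exp_mul_I, ofReal_cos, ofReal_sin, mul_comm I]
  obtain ⟨hR, hJ⟩ := qspCoeffs_norms_le Ψ d
  rw [hexp, add_smul, Finset.sum_range_succ']
  exact (norms_smul_add_I_mul_smul_le _ _ _ _).2.trans
    (abs_cos_mul_add_abs_sin_mul_le (reNorm_nonneg _) (imNorm_nonneg _) hR hJ (Ψ 0)).2

lemma pad_succ_succ (Φ : ℕ →₀ ℝ) (n j : ℕ) : pad Φ (n + 1) (j + 1) = pad Φ n j := by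
  simp only [pad]
  split_ifs <;> first | omega | congr 1 <;> omega

lemma sum_range_abs_pad (Φ : ℕ →₀ ℝ) (m : ℕ) :
    ∑ j ∈ Finset.range (2 * m + 1), |pad Φ (m + 1) j| = 2 * ∑ k ∈ Finset.range (m + 1), |Φ k| := by
  induction m with
  | zero => simp [pad, abs_mul]
  | succ m ih =>
    have hfirst : pad Φ (m + 2) 0 = Φ (m + 1) := by simp [pad]
    have hlast : pad Φ (m + 2) (2 * m + 2) = Φ (m + 1) := by
      simp only [pad]; rw [if_neg (by omega), if_neg (by omega)]; congr 1; omega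
    rw [show 2 * (m + 1) + 1 = 2 * m + 1 + 1 + 1 by ring, Finset.sum_range_succ,
      Finset.sum_range_succ', Finset.sum_range_succ _ (m + 1)]
    rw [hlast, hfirst]
    simp only [pad_succ_succ, ih]
    ring

lemma l1_eq_sum_range (Φ : ℕ →₀ ℝ) : l1 Φ = ∑ k ∈ Finset.range (nOf Φ), |Φ k| := by
  refine Finset.sum_subset (fun k hk => ?_) fun k _ hk => by simp [Finsupp.notMem_support_iff.mp hk]
  exact Finset.mem_range.mpr (Nat.lt_succ_of_le (Finset.le_sup (f := id) hk))

lemma sum_range_abs_pad_nOf (Φ : ℕ →₀ ℝ) :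
    ∑ j ∈ Finset.range (2 * nOf Φ - 2 + 1), |pad Φ (nOf Φ) j| = 2 * l1 Φ := by
  rw [l1_eq_sum_range, nOf, show 2 * (Φ.support.sup id + 1) - 2 = 2 * Φ.support.sup id by omega,
    sum_range_abs_pad]

end QSP

open QSP Complex

/-- `‖F(Φ)‖₁ ≤ sinh(2‖Φ‖₁)` for every finitely supported `Φ`. -/
theorem Fmap_one_norm_bound (Φ : ℕ →₀ ℝ) :
    Summable (fun j => |Fmap Φ j|) ∧
    ∑' j, |Fmap Φ j| ≤ Real.sinh (2 * l1 Φ) := by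
  set Ψ := pad Φ (nOf Φ)
  set d := 2 * nOf Φ - 2
  set c := qspCoeffs Ψ d
  have hF : ∀ j, Fmap Φ j =
      ∑ a ∈ c.support, if a.natAbs = 2 * j then (exp (I * Ψ 0) * c a).im else 0 :=
    chebCoeff_eq_of_cos (gfun_cos d Ψ)
  obtain ⟨hsum, hle⟩ := summable_abs_and_tsum_abs_le hF
  refine ⟨hsum, hle.trans ?_⟩
  calc ∑ a ∈ c.support, |(exp (I * Ψ 0) * c a).im| = imNorm (exp (I * Ψ 0) • c) :=
        (imNorm_smul_eq_sum _ c).symm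
    _ ≤ Real.sinh (∑ k ∈ Finset.range (d + 1), |Ψ k|) := imNorm_exp_smul_qspCoeffs_le Ψ d
    _ = Real.sinh (2 * l1 Φ) := by rw [sum_range_abs_pad_nOf]
end
end

section
/- For every finitely supported real sequence Φ and every k ∈ ℕ: ∂F/∂φ_k(Φ) = F(Φ + (π/4)·e_k) − F(Φ − (π/4)·e_k); equivalently, for all x ∈ [−1,1], ∂g(x,Φ)/∂φ_k = g(x, Φ + (π/4)·e_k) − g(x, Φ − (π/4)·e_k). -/
open scoped Real
noncomputable section

/-! All matrices `U(x, Ψ)` have the form `[[a, b], [-b̄, ā]]`, and for such `U` and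
`x ∈ [-1, 1]` one has `Im (W U W)₀₀ = Im U₀₀`. Since `Ψ(Φ, n + 1) = (0, Ψ(Φ, n), 0)` when
`φ_n = 0`, `g(x, Φ)` may therefore be computed with any padding `N`. In `Ψ(Φ, N)` the phase `φ_k`
sits at the two slots `N - 1 ± k` (or once, doubled, at the centre when `k = 0`), so as a function
of `t = φ_k` the unitary is `A e^{itZ} B e^{itZ} C` and `g = α cos 2t + β sin 2t + γ`. For such
functions the derivative is `f(t + π/4) - f(t - π/4)`. The coefficients `α, β, γ` are determined
by the values at `t = 0, π/4, π/2`, hence continuous in `x`, and Chebyshev coefficients are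
linear, so `t ↦ F(Φ + (t - φ_k) e_k)` has the same form. -/

open Real ComplexConjugate

def IsFreqTwoTrig (f : ℝ → ℝ) : Prop :=
  ∃ α β γ : ℝ, ∀ t, f t = α * cos (2 * t) + β * sin (2 * t) + γ

namespace IsFreqTwoTrig

variable {f : ℝ → ℝ}

theorem eq_interp (hf : IsFreqTwoTrig f) (t : ℝ) :
    f t = (f 0 - f (π / 2)) / 2 * cos (2 * t) +
      (f (π / 4) - (f 0 + f (π / 2)) / 2) * sin (2 * t) + (f 0 + f (π / 2)) / 2 := by
  obtain ⟨α, β, γ, hf⟩ := hf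
  have h0 := hf 0
  have h2 := hf (π / 2)
  have h4 := hf (π / 4)
  rw [show 2 * (π / 2) = π by ring] at h2
  rw [show 2 * (π / 4) = π / 2 by ring] at h4
  simp only [mul_zero, cos_zero, sin_zero, cos_pi, sin_pi, cos_pi_div_two,
    sin_pi_div_two] at h0 h2 h4
  rw [hf t, h0, h2, h4]
  ring

theorem deriv_eq_sub (hf : IsFreqTwoTrig f) (φ : ℝ) :
    deriv f φ = f (φ + π / 4) - f (φ - π / 4) := by
  obtain ⟨α, β, γ, hf⟩ := hf
  have hd : HasDerivAt f (α * (-sin (2 * φ) * 2) + β * (cos (2 * φ) * 2)) φ := by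
    rw [funext hf]
    have h2 := (hasDerivAt_id φ).const_mul (2 : ℝ)
    simp only [mul_one] at h2
    exact (((hasDerivAt_cos _).comp φ h2).const_mul α).add
      (((hasDerivAt_sin _).comp φ h2).const_mul β) |>.add_const γ
  rw [hd.deriv, hf, hf, show 2 * (φ + π / 4) = 2 * φ + π / 2 by ring,
    show 2 * (φ - π / 4) = 2 * φ - π / 2 by ring, cos_add_pi_div_two, sin_add_pi_div_two,
    cos_sub_pi_div_two, sin_sub_pi_div_two]
  ring

end IsFreqTwoTrig

section ChebCoeff

variable {f g : ℝ → ℝ} (j : ℕ)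

theorem chebCoeff_congr (h : Set.EqOn f g (Set.Icc (-1) 1)) :
    chebCoeff f j = chebCoeff g j := by
  unfold chebCoeff
  congr 1
  refine intervalIntegral.integral_congr fun θ _ => ?_
  simp only [h ⟨neg_one_le_cos θ, cos_le_one θ⟩]

theorem chebCoeff_add (hf : Continuous f) (hg : Continuous g) :
    chebCoeff (fun x => f x + g x) j = chebCoeff f j + chebCoeff g j := by
  have hint {h : ℝ → ℝ} (hh : Continuous h) :
      IntervalIntegrable (fun θ => h (cos θ) * cos (2 * j * θ)) MeasureTheory.volume 0 (2 * π) :=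
    ((hh.comp continuous_cos).mul (by fun_prop)).intervalIntegrable _ _
  simp only [chebCoeff, add_mul, intervalIntegral.integral_add (hint hf) (hint hg), mul_add]

theorem chebCoeff_mul_const (c : ℝ) : chebCoeff (fun x => f x * c) j = chebCoeff f j * c := by
  simp only [chebCoeff, mul_right_comm _ c, intervalIntegral.integral_mul_const]
  ring

end ChebCoeff

theorem isFreqTwoTrig_chebCoeff {G : ℝ → ℝ → ℝ} (hG : ∀ t, Continuous (G t))
    (h : ∀ x ∈ Set.Icc (-1 : ℝ) 1, IsFreqTwoTrig fun t => G t x) (j : ℕ) :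
    IsFreqTwoTrig fun t => chebCoeff (G t) j := by
  refine ⟨chebCoeff (fun x => (G 0 x - G (π / 2) x) / 2) j,
    chebCoeff (fun x => G (π / 4) x - (G 0 x + G (π / 2) x) / 2) j,
    chebCoeff (fun x => (G 0 x + G (π / 2) x) / 2) j, fun t => ?_⟩
  have hG₀ := hG 0
  have hG₂ := hG (π / 2)
  have hG₄ := hG (π / 4)
  dsimp only
  rw [chebCoeff_congr j fun x hx => (h x hx).eq_interp t, chebCoeff_add _ (by fun_prop)
    (by fun_prop), chebCoeff_add _ (by fun_prop) (by fun_prop), chebCoeff_mul_const,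
    chebCoeff_mul_const]

def quaternionMatrices : Submonoid (Matrix (Fin 2) (Fin 2) ℂ) where
  carrier := {M | M 1 1 = conj (M 0 0) ∧ M 1 0 = -conj (M 0 1)}
  mul_mem' := by
    rintro M N ⟨hM₁, hM₂⟩ ⟨hN₁, hN₂⟩
    constructor <;>
    · simp only [Matrix.mul_apply, Fin.sum_univ_two, map_add, map_mul, hM₁, hM₂, hN₁, hN₂,
        map_neg, Complex.conj_conj]
      ring
  one_mem' := by simp

theorem Wmat_mem_quaternionMatrices (x : ℝ) : Wmat x ∈ quaternionMatrices := by
  constructor <;> simp [Wmat]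

theorem expZ_mem_quaternionMatrices (ψ : ℝ) : expZ ψ ∈ quaternionMatrices := by
  constructor <;> simp [expZ, ← Complex.exp_conj]

theorem expZ_zero : expZ 0 = 1 := by
  simp [expZ, Matrix.one_fin_two]

theorem expZ_add (a b : ℝ) : expZ (a + b) = expZ a * expZ b := by
  simp [expZ, mul_add, Complex.exp_add, mul_comm]

theorem im_Wmat_mul_mul_Wmat {x : ℝ} (hx : x ∈ Set.Icc (-1 : ℝ) 1)
    {U : Matrix (Fin 2) (Fin 2) ℂ} (hU : U ∈ quaternionMatrices) :
    ((Wmat x * U * Wmat x) 0 0).im = (U 0 0).im := by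
  obtain ⟨hU₁, hU₂⟩ := hU
  have hs : √(1 - x ^ 2) ^ 2 = 1 - x ^ 2 := Real.sq_sqrt (by nlinarith [hx.1, hx.2])
  simp only [Wmat, Matrix.mul_apply, Fin.sum_univ_two, Matrix.of_apply, Matrix.cons_val',
    Matrix.cons_val_zero, Matrix.cons_val_one, Matrix.cons_val_fin_one, hU₁, hU₂,
    Complex.add_im, Complex.mul_im, Complex.add_re, Complex.mul_re, Complex.ofReal_re,
    Complex.ofReal_im, Complex.I_re, Complex.I_im, Complex.conj_re, Complex.conj_im,
    Complex.neg_re, Complex.neg_im]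
  linear_combination (U 0 0).im * hs

section Umat

variable (x : ℝ) (Ψ : ℕ → ℝ)

theorem Umat_zero : Umat x 0 Ψ = expZ (Ψ 0) := by
  simp [Umat]

theorem Umat_succ (d : ℕ) : Umat x (d + 1) Ψ = Umat x d Ψ * (Wmat x * expZ (Ψ (d + 1))) := by
  simp only [Umat, List.prod_range_succ, mul_assoc]

theorem Umat_succ' (d : ℕ) :
    Umat x (d + 1) Ψ = expZ (Ψ 0) * Wmat x * Umat x d (fun i => Ψ (i + 1)) := by
  simp only [Umat, List.prod_range_succ', mul_assoc]

theorem Umat_mem_quaternionMatrices (d : ℕ) : Umat x d Ψ ∈ quaternionMatrices := by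
  induction d with
  | zero => exact Umat_zero x Ψ ▸ expZ_mem_quaternionMatrices _
  | succ d ih =>
    rw [Umat_succ]
    exact mul_mem ih (mul_mem (Wmat_mem_quaternionMatrices x) (expZ_mem_quaternionMatrices _))

theorem continuous_Umat (d : ℕ) : Continuous fun x => Umat x d Ψ := by
  have hW : Continuous Wmat := by
    unfold Wmat
    fun_prop
  induction d with
  | zero => simpa only [Umat_zero] using continuous_const
  | succ d ih => simpa only [Umat_succ] using ih.matrix_mul (hW.matrix_mul continuous_const)

variable {x Ψ}

theorem Umat_congr {d : ℕ} {Ψ' : ℕ → ℝ} (h : ∀ i ≤ d, Ψ' i = Ψ i) :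
    Umat x d Ψ' = Umat x d Ψ := by
  induction d with
  | zero => simp only [Umat_zero, h 0 le_rfl]
  | succ d ih => rw [Umat_succ, Umat_succ, ih fun i hi => h i (by omega), h (d + 1) le_rfl]

theorem exists_Umat_add_eq_mul (a b : ℕ) :
    ∃ T, ∀ Ψ' : ℕ → ℝ, (∀ i, a < i → i ≤ a + b → Ψ' i = Ψ i) →
      Umat x (a + b) Ψ' = Umat x a Ψ' * T := by
  induction b with
  | zero => exact ⟨1, fun _ _ => (mul_one _).symm⟩
  | succ b ih =>
    obtain ⟨T, hT⟩ := ih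
    refine ⟨T * (Wmat x * expZ (Ψ (a + b + 1))), fun Ψ' h => ?_⟩
    rw [← add_assoc, Umat_succ, hT Ψ' fun i hi hib => h i hi (by omega),
      h (a + b + 1) (by omega) (by omega), mul_assoc]

theorem exists_Umat_eq_mul_expZ_mul {p d : ℕ} (hp : 1 ≤ p) (hpd : p ≤ d) :
    ∃ A C, ∀ Ψ' : ℕ → ℝ, (∀ i ≤ d, i ≠ p → Ψ' i = Ψ i) →
      Umat x d Ψ' = A * expZ (Ψ' p) * C := by
  obtain ⟨q, rfl⟩ : ∃ q, p = q + 1 := ⟨p - 1, by omega⟩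
  obtain ⟨r, rfl⟩ : ∃ r, d = q + 1 + r := ⟨d - (q + 1), by omega⟩
  obtain ⟨T, hT⟩ := exists_Umat_add_eq_mul (x := x) (Ψ := Ψ) (q + 1) r
  refine ⟨Umat x q Ψ * Wmat x, T, fun Ψ' h => ?_⟩
  rw [hT Ψ' fun i hi hir => h i hir (by omega), Umat_succ,
    Umat_congr fun i hi => h i (by omega) (by omega)]
  simp only [mul_assoc]

theorem exists_Umat_eq_mul_expZ_mul_expZ_mul {p q d : ℕ} (hp : 1 ≤ p) (hpq : p < q)
    (hqd : q ≤ d) :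
    ∃ A B C, ∀ Ψ' : ℕ → ℝ, (∀ i ≤ d, i ≠ p → i ≠ q → Ψ' i = Ψ i) →
      Umat x d Ψ' = A * expZ (Ψ' p) * B * expZ (Ψ' q) * C := by
  obtain ⟨r, rfl⟩ : ∃ r, q = r + 1 := ⟨q - 1, by omega⟩
  obtain ⟨s, rfl⟩ : ∃ s, d = r + 1 + s := ⟨d - (r + 1), by omega⟩
  obtain ⟨T, hT⟩ := exists_Umat_add_eq_mul (x := x) (Ψ := Ψ) (r + 1) s
  obtain ⟨A, C, hAC⟩ :=
    exists_Umat_eq_mul_expZ_mul (x := x) (Ψ := Ψ) hp (Nat.le_of_lt_succ hpq)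
  refine ⟨A, C * Wmat x, T, fun Ψ' h => ?_⟩
  rw [hT Ψ' fun i hi his => h i his (by omega) (by omega), Umat_succ,
    hAC Ψ' fun i hi hip => h i (by omega) hip (by omega)]
  simp only [mul_assoc]

end Umat

theorem isFreqTwoTrig_im_mul_expZ_mul_expZ_mul (A B C : Matrix (Fin 2) (Fin 2) ℂ) :
    IsFreqTwoTrig fun t => ((A * expZ t * B * expZ t * C) 0 0).im := by
  have hexp (z : ℂ) :
      Complex.exp (Complex.I * z) = Complex.cos z + Complex.sin z * Complex.I := by
    rw [mul_comm, Complex.exp_mul_I]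
  have hexp_neg (z : ℂ) :
      Complex.exp (-(Complex.I * z)) = Complex.cos z - Complex.sin z * Complex.I := by
    rw [← mul_neg, hexp, Complex.cos_neg, Complex.sin_neg]
    ring
  set c₁ := A 0 0 * B 0 0 * C 0 0
  set c₂ := A 0 1 * B 1 1 * C 1 0
  set c₃ := A 0 0 * B 0 1 * C 1 0 + A 0 1 * B 1 0 * C 0 0
  refine ⟨c₁.im + c₂.im, c₁.re - c₂.re, c₃.im, fun t => ?_⟩
  have hentry : (A * expZ t * B * expZ t * C) 0 0 =
      c₁ * (cos (2 * t) + sin (2 * t) * Complex.I) +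
        c₂ * (cos (2 * t) - sin (2 * t) * Complex.I) + c₃ := by
    simp only [expZ, hexp, hexp_neg, Matrix.mul_apply, Fin.sum_univ_two, Matrix.of_apply,
      Matrix.cons_val', Matrix.cons_val_zero, Matrix.cons_val_one, Matrix.empty_val',
      Matrix.cons_val_fin_one, mul_zero, add_zero, zero_add, Complex.ofReal_cos,
      Complex.ofReal_sin, Complex.ofReal_mul, Complex.ofReal_ofNat, Complex.cos_two_mul,
      Complex.sin_two_mul, c₁, c₂, c₃]
    linear_combination (c₃ - c₁ - c₂) * Complex.sin_sq_add_cos_sq (t : ℂ) +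
      Complex.sin t ^ 2 * (c₁ + c₂ - c₃) * Complex.I_sq
  simp only [hentry, Complex.add_im, Complex.sub_im, Complex.mul_im, Complex.mul_re,
    Complex.add_re, Complex.sub_re, Complex.ofReal_re, Complex.ofReal_im, Complex.I_re,
    Complex.I_im]
  ring

theorem continuous_gred (Φ : ℕ →₀ ℝ) : Continuous fun x => gred x Φ :=
  Complex.continuous_im.comp ((continuous_Umat _ _).matrix_elem 0 0)

section Padding

variable (Φ : ℕ →₀ ℝ)

theorem nOf_le_iff {n : ℕ} (hn : 1 ≤ n) : nOf Φ ≤ n ↔ ∀ i, n ≤ i → Φ i = 0 := by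
  rw [nOf, ← Nat.le_sub_iff_add_le hn, Finset.sup_le_iff]
  refine ⟨fun h i hi => ?_, fun h i hi => ?_⟩
  · by_contra hΦ
    have := h i (Finsupp.mem_support_iff.mpr hΦ)
    simp only [id] at this
    omega
  · by_contra hi'
    exact Finsupp.mem_support_iff.mp hi (h i (by simp only [id] at hi'; omega))

theorem pad_succ_succ (n j : ℕ) : pad Φ (n + 1) (j + 1) = pad Φ n j := by
  unfold pad
  split_ifs <;> first | rfl | (congr 1; omega)

theorem Umat_pad_succ (x : ℝ) {n : ℕ} (hn : 1 ≤ n) (hΦ : Φ n = 0) :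
    Umat x (2 * (n + 1) - 2) (pad Φ (n + 1)) =
      Wmat x * Umat x (2 * n - 2) (pad Φ n) * Wmat x := by
  obtain ⟨m, rfl⟩ : ∃ m, n = m + 1 := ⟨n - 1, by omega⟩
  have hfirst : pad Φ (m + 1 + 1) 0 = 0 := by
    unfold pad
    rw [if_pos (by omega), show m + 1 + 1 - 1 - 0 = m + 1 by omega, hΦ]
  have hlast : pad Φ (m + 1) (2 * m + 1) = 0 := by
    unfold pad
    rw [if_neg (by omega), if_neg (by omega), show 2 * m + 1 + 1 - (m + 1) = m + 1 by omega, hΦ]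
  rw [show 2 * (m + 1 + 1) - 2 = 2 * m + 1 + 1 by omega, show 2 * (m + 1) - 2 = 2 * m by omega,
    Umat_succ', hfirst, expZ_zero, one_mul]
  simp only [pad_succ_succ]
  rw [Umat_succ, hlast, expZ_zero, mul_one, mul_assoc]

theorem gred_eq_gfun_pad {x : ℝ} (hx : x ∈ Set.Icc (-1 : ℝ) 1) {n : ℕ} (hn : nOf Φ ≤ n) :
    gred x Φ = gfun x (2 * n - 2) (pad Φ n) := by
  induction n, hn using Nat.le_induction with
  | base => rfl
  | succ n hn ih =>
    have hn₁ : 1 ≤ n := le_trans (by simp [nOf]) hn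
    rw [ih, gfun, gfun, Umat_pad_succ Φ x hn₁ ((nOf_le_iff Φ hn₁).mp hn n le_rfl),
      im_Wmat_mul_mul_Wmat hx (Umat_mem_quaternionMatrices x _ _)]

variable (k : ℕ) (t : ℝ) (N : ℕ)

theorem pad_update_apply_of_ne {i : ℕ} (h₁ : i + k + 1 ≠ N) (h₂ : i + 1 ≠ N + k) :
    pad (Φ.update k t) N i = pad Φ N i := by
  simp only [pad, Finsupp.update_apply]
  split_ifs <;> first | rfl | omega

theorem pad_update_apply_sub (hk : 1 ≤ k) (hkN : k < N) :
    pad (Φ.update k t) N (N - 1 - k) = t := by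
  simp only [pad, Finsupp.update_apply]
  split_ifs <;> first | rfl | omega

theorem pad_update_apply_add (hk : 1 ≤ k) (hkN : k < N) :
    pad (Φ.update k t) N (N - 1 + k) = t := by
  simp only [pad, Finsupp.update_apply]
  split_ifs <;> first | rfl | omega

theorem pad_update_zero_apply (hN : 1 ≤ N) : pad (Φ.update 0 t) N (N - 1) = 2 * t := by
  simp only [pad, Finsupp.update_apply]
  split_ifs <;> first | rfl | omega

end Padding

theorem isFreqTwoTrig_gred_update {x : ℝ} (hx : x ∈ Set.Icc (-1 : ℝ) 1) (Φ : ℕ →₀ ℝ)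
    (k : ℕ) :
    IsFreqTwoTrig fun t => gred x (Φ.update k t) := by
  set N := max (nOf Φ) (k + 2)
  have hN : 1 ≤ N := by omega
  have hnOf (t : ℝ) : nOf (Φ.update k t) ≤ N := by
    refine (nOf_le_iff _ hN).mpr fun i hi => ?_
    rw [Finsupp.update_apply, if_neg (by omega)]
    exact (nOf_le_iff Φ hN).mp (le_max_left _ _) i hi
  simp only [gred_eq_gfun_pad _ hx (hnOf _), gfun]
  rcases Nat.eq_zero_or_pos k with rfl | hk
  · -- `φ₀` enters the padded sequence once, as `2φ₀`, and `e^{2itZ} = e^{itZ} · 1 · e^{itZ}`.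
    obtain ⟨A, C, hAC⟩ := exists_Umat_eq_mul_expZ_mul (x := x) (Ψ := pad Φ N) (p := N - 1)
      (d := 2 * N - 2) (by omega) (by omega)
    convert isFreqTwoTrig_im_mul_expZ_mul_expZ_mul A 1 C using 3 with t
    rw [hAC _ fun i _ hi => pad_update_apply_of_ne Φ 0 t N (by omega) (by omega),
      pad_update_zero_apply Φ t N hN, two_mul, expZ_add, mul_one, ← mul_assoc A]
  · obtain ⟨A, B, C, hABC⟩ := exists_Umat_eq_mul_expZ_mul_expZ_mul (x := x) (Ψ := pad Φ N)
      (p := N - 1 - k) (q := N - 1 + k) (d := 2 * N - 2) (by omega) (by omega) (by omega)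
    convert isFreqTwoTrig_im_mul_expZ_mul_expZ_mul A B C using 3 with t
    rw [hABC _ fun i _ hi₁ hi₂ => pad_update_apply_of_ne Φ k t N (by omega) (by omega),
      pad_update_apply_sub Φ k t N hk (by omega), pad_update_apply_add Φ k t N hk (by omega)]

theorem Finsupp.add_single_eq_update {α M : Type*} [AddZeroClass M] (f : α →₀ M) (a : α)
    (b : M) : f + Finsupp.single a b = f.update a (f a + b) := by
  classical
  ext i
  by_cases h : i = a <;> simp [Finsupp.update_apply, h]

/-- `∂F/∂φ_k(Φ) = F(Φ + (π/4)e_k) - F(Φ - (π/4)e_k)`; equivalently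
`∂g(x,Φ)/∂φ_k = g(x, Φ + (π/4)e_k) - g(x, Φ - (π/4)e_k)` for `x ∈ [-1,1]`. -/
theorem DF_column_formula (Φ : ℕ →₀ ℝ) (k : ℕ) :
    (∀ j, FmapPD k Φ j =
      Fmap (Φ + Finsupp.single k (π / 4)) j - Fmap (Φ - Finsupp.single k (π / 4)) j) ∧
    (∀ x ∈ Set.Icc (-1 : ℝ) 1,
      gredPD k x Φ =
        gred x (Φ + Finsupp.single k (π / 4)) - gred x (Φ - Finsupp.single k (π / 4))) := by
  have hg (x) (hx : x ∈ Set.Icc (-1 : ℝ) 1) := isFreqTwoTrig_gred_update hx Φ k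
  have hF (j) : IsFreqTwoTrig fun t => Fmap (Φ.update k t) j :=
    isFreqTwoTrig_chebCoeff (fun t => continuous_gred (Φ.update k t)) hg j
  rw [sub_eq_add_neg, ← Finsupp.single_neg, Finsupp.add_single_eq_update,
    Finsupp.add_single_eq_update, ← sub_eq_add_neg]
  exact ⟨fun j => (hF j).deriv_eq_sub (Φ k), fun x hx => (hg x hx).deriv_eq_sub (Φ k)⟩
end
end
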